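/- Let T be a left-continuous t-norm and 𝐓 the pointwise triangle function 𝐓(F,G)(x) = T(F(x),G(x)). Then 𝐓 dominates τ_T: for all F₁, F₂, G₁, G₂ ∈ Δ⁺, 𝐓(τ_T(F₁,G₁), τ_T(F₂,G₂)) ≥ τ_T(𝐓(F₁,F₂), 𝐓(G₁,G₂)). -/

import Mathlib

open scoped ENNReal

noncomputable section

/-- Distribution-type functions on `[0,∞]`. -/
abbrev DF := ℝ≥0∞ → ℝ

/-- The unit step distribution `ε_t`. -/
def stepDF (t : ℝ≥0∞) : DF := fun x => if x ≤ t then 0 else 1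

/-- `F` is a distance distribution function: nondecreasing, left-continuous,
`F 0 = 0`, `F ∞ = 1`, with values in `[0,1]`. -/
def IsDDF (F : DF) : Prop :=
  Monotone F ∧ F 0 = 0 ∧ F ⊤ = 1 ∧ (∀ x, F x ∈ Set.Icc (0:ℝ) 1) ∧
    ∀ x : ℝ≥0∞, x ≠ 0 → Filter.Tendsto F (nhdsWithin x (Set.Iio x)) (nhds (F x))

/-- `τ` is a triangle function: it maps `Δ⁺ × Δ⁺` to `Δ⁺`, is commutative,
associative, nondecreasing in each place, and has `ε₀` as identity. -/
def IsTriangleFn (τ : DF → DF → DF) : Prop :=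
  (∀ F G, IsDDF F → IsDDF G → IsDDF (τ F G)) ∧
  (∀ F G, τ F G = τ G F) ∧
  (∀ F G H, τ (τ F G) H = τ F (τ G H)) ∧
  (∀ F G H, F ≤ G → τ F H ≤ τ G H) ∧
  (∀ F, IsDDF F → τ F (stepDF 0) = F)

/-- Membership in `M_b`: `m` is continuous and strictly increasing on `[0,b]`
and maps `[0,b]` onto `[0,∞]`. -/
def MemMb (b : ℝ≥0∞) (m : ℝ≥0∞ → ℝ≥0∞) : Prop :=
  0 < b ∧ ContinuousOn m (Set.Iic b) ∧ StrictMonoOn m (Set.Iic b) ∧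
    m '' Set.Iic b = Set.univ

/-- The `m`-transform `Fm` of `F`: `Fm x = F (m x)` for `x < b`, the left limit
at `x = b` (for finite `b`), and `1` for `x > b`. -/
def mTransform (b : ℝ≥0∞) (m : ℝ≥0∞ → ℝ≥0∞) (F : DF) : DF :=
  if b = ⊤ then fun x => F (m x)
  else fun x =>
    if x < b then F (m x)
    else if x = b then ⨆ y : Set.Iio b, F (m y)
    else 1

/-- `T` is a t-norm on `[0,1]`: commutative, associative, nondecreasing in each
variable, with `1` as identity, mapping `[0,1]²` into `[0,1]`. -/
def IsTNorm (T : ℝ → ℝ → ℝ) : Prop :=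
  (∀ a ∈ Set.Icc (0:ℝ) 1, ∀ b ∈ Set.Icc (0:ℝ) 1, T a b ∈ Set.Icc (0:ℝ) 1) ∧
  (∀ a b, T a b = T b a) ∧
  (∀ a b c, T (T a b) c = T a (T b c)) ∧
  (∀ a b c, a ≤ b → T a c ≤ T b c) ∧
  (∀ a ∈ Set.Icc (0:ℝ) 1, T a 1 = a)

/-- The triangle function `τ_T(F,G)(x) = sup { T (F u) (G v) : u + v = x }`. -/
def tauT (T : ℝ → ℝ → ℝ) (F G : DF) : DF :=
  fun x => ⨆ p : {q : ℝ≥0∞ × ℝ≥0∞ // q.1 + q.2 = x}, T (F p.1.1) (G p.1.2)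

/-- The pointwise triangle function `𝐓(F,G)(x) = T (F x) (G x)`. -/
def pointT (T : ℝ → ℝ → ℝ) (F G : DF) : DF := fun x => T (F x) (G x)

/-!
For `u + v = x`, associativity and commutativity of `T` regroup
`T (T (F₁ u) (F₂ u)) (T (G₁ v) (G₂ v))` as `T (T (F₁ u) (G₁ v)) (T (F₂ u) (G₂ v))`, and the two
inner terms are bounded by `τ_T(F₁,G₁)(x)` and `τ_T(F₂,G₂)(x)`; monotonicity of `T` finishes.
-/

namespace IsTNorm

variable {T : ℝ → ℝ → ℝ} (hT : IsTNorm T)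
include hT

theorem mono_right {a b c : ℝ} (h : b ≤ c) : T a b ≤ T a c := by
  rw [hT.2.1 a b, hT.2.1 a c]
  exact hT.2.2.2.1 _ _ _ h

theorem mono {a a' b b' : ℝ} (ha : a ≤ a') (hb : b ≤ b') : T a b ≤ T a' b' :=
  (hT.2.2.2.1 _ _ _ ha).trans (hT.mono_right hb)

theorem mul_mul_mul_comm (a b c d : ℝ) : T (T a b) (T c d) = T (T a c) (T b d) := by
  obtain ⟨-, comm, assoc, -⟩ := hT
  rw [assoc, ← assoc b c d, comm b c, assoc c b d, ← assoc a c (T b d)]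

end IsTNorm

section tauT

variable {T : ℝ → ℝ → ℝ} {F G : DF}

theorem bddAbove_tauT_terms (hT : IsTNorm T) (hF : ∀ u, F u ∈ Set.Icc (0:ℝ) 1)
    (hG : ∀ v, G v ∈ Set.Icc (0:ℝ) 1) (x : ℝ≥0∞) :
    BddAbove (Set.range fun p : {q : ℝ≥0∞ × ℝ≥0∞ // q.1 + q.2 = x} =>
      T (F p.1.1) (G p.1.2)) := by
  refine ⟨1, ?_⟩
  rintro _ ⟨⟨⟨u, v⟩, -⟩, rfl⟩
  exact (hT.1 _ (hF u) _ (hG v)).2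

theorem le_tauT (hT : IsTNorm T) (hF : ∀ u, F u ∈ Set.Icc (0:ℝ) 1)
    (hG : ∀ v, G v ∈ Set.Icc (0:ℝ) 1) (u v : ℝ≥0∞) :
    T (F u) (G v) ≤ tauT T F G (u + v) :=
  le_ciSup (bddAbove_tauT_terms hT hF hG (u + v)) ⟨(u, v), rfl⟩

theorem tauT_le {x : ℝ≥0∞} {c : ℝ} (h : ∀ u v, u + v = x → T (F u) (G v) ≤ c) :
    tauT T F G x ≤ c :=
  haveI : Nonempty {q : ℝ≥0∞ × ℝ≥0∞ // q.1 + q.2 = x} := ⟨⟨(x, 0), add_zero x⟩⟩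
  ciSup_le fun p => h p.1.1 p.1.2 p.2

end tauT

theorem pointT_dominates_tauT_general
    (T : ℝ → ℝ → ℝ) (hT : IsTNorm T)
    (F₁ F₂ G₁ G₂ : DF) (hF₁ : IsDDF F₁) (hF₂ : IsDDF F₂)
    (hG₁ : IsDDF G₁) (hG₂ : IsDDF G₂) :
    pointT T (tauT T F₁ G₁) (tauT T F₂ G₂) ≥
      tauT T (pointT T F₁ F₂) (pointT T G₁ G₂) := by
  intro x
  refine tauT_le fun u v huv => ?_
  rw [pointT, pointT, hT.mul_mul_mul_comm, pointT, ← huv]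
  exact hT.mono (le_tauT hT hF₁.2.2.2.1 hG₁.2.2.2.1 u v)
    (le_tauT hT hF₂.2.2.2.1 hG₂.2.2.2.1 u v)

/-- The pointwise triangle function `𝐓` dominates `τ_T` for any left-continuous
t-norm `T`. -/
theorem pointT_dominates_tauT
    (T : ℝ → ℝ → ℝ) (hT : IsTNorm T)
    (hTlc : ∀ b x : ℝ, Filter.Tendsto (fun a => T a b)
      (nhdsWithin x (Set.Iio x)) (nhds (T x b)))
    (F₁ F₂ G₁ G₂ : DF) (hF₁ : IsDDF F₁) (hF₂ : IsDDF F₂)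
    (hG₁ : IsDDF G₁) (hG₂ : IsDDF G₂) :
    pointT T (tauT T F₁ G₁) (tauT T F₂ G₂) ≥
      tauT T (pointT T F₁ F₂) (pointT T G₁ G₂) :=
  pointT_dominates_tauT_general T hT F₁ F₂ G₁ G₂ hF₁ hF₂ hG₁ hG₂
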